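/- arXiv:2210.06369 — 4 statements merged into one kernel-verified Lean document; each statement's English description precedes it below -/
import Mathlib

section
/- Let m ≥ 3 be an integer, let A_m be the dihedral Artin group on generators s, t, and let Δ be its Garside element. Every element g ∈ A_m can be written in exactly one way as g = w₁ w₂ ⋯ w_k Δ^ℓ, where ℓ ∈ ℤ, k ≥ 0, each w_i is (the image in A_m of) an atom, and the sequence (w₁, …, w_k) is left-weighted; i.e., both the integer ℓ and the left-weighted sequence of atoms are uniquely determined by g. -/
/-- The alternating product `x y x y ⋯` with `m` factors, in a group. -/
def altProd {G : Type*} [Group G] (x y : G) (m : ℕ) : G :=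
  ((List.range m).map (fun i => if i % 2 = 0 then x else y)).prod

/-- The defining relation of the dihedral Artin group `⟨s, t ∣ π(s,t;m) = π(t,s;m)⟩`,
with `true` playing the role of `s` and `false` that of `t`. -/
def dihedralRels (m : ℕ) : Set (FreeGroup Bool) :=
  {altProd (FreeGroup.of true) (FreeGroup.of false) m *
    (altProd (FreeGroup.of false) (FreeGroup.of true) m)⁻¹}

/-- The dihedral Artin group `A_m = ⟨s, t ∣ π(s,t;m) = π(t,s;m)⟩`. -/
abbrev DihedralArtin (m : ℕ) : Type := PresentedGroup (dihedralRels m)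

/-- The generator of the dihedral Artin group labelled by a Boolean:
`true ↦ s`, `false ↦ t`. -/
def DihedralArtin.gen (m : ℕ) (b : Bool) : DihedralArtin m := PresentedGroup.of b

/-- The Garside element `Δ = sts⋯` (`m` letters) of the dihedral Artin group. -/
def garside (m : ℕ) : DihedralArtin m :=
  altProd (DihedralArtin.gen m true) (DihedralArtin.gen m false) m

/-- An atom of the dihedral Artin group `A_m`: a nonempty positive alternating word in
`s` and `t` of length strictly less than `m`, determined by its first letter and its
length. -/
def Atom (m : ℕ) : Type := {p : Bool × ℕ // 1 ≤ p.2 ∧ p.2 ≤ m - 1}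

/-- The first letter of an atom. -/
def Atom.firstLetter {m : ℕ} (w : Atom m) : Bool := w.1.1

/-- The last letter of an atom (the alternating word of length `k` starting with `x`
ends with `x` iff `k` is odd). -/
def Atom.lastLetter {m : ℕ} (w : Atom m) : Bool :=
  if w.1.2 % 2 = 1 then w.1.1 else !w.1.1

/-- The image of an atom in the dihedral Artin group. -/
def Atom.elem {m : ℕ} (w : Atom m) : DihedralArtin m :=
  altProd (DihedralArtin.gen m w.1.1) (DihedralArtin.gen m !w.1.1) w.1.2

/-- A sequence of atoms is left-weighted if the last letter of each atom coincides with
the first letter of the next. -/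
def LeftWeighted {m : ℕ} (L : List (Atom m)) : Prop :=
  L.Chain' (fun u v => u.lastLetter = v.firstLetter)


section AltProd
variable {G H : Type*} [Group G] [Group H] (x y : G)

@[simp] theorem altProd_zero : altProd x y 0 = 1 := rfl

theorem altProd_succ (n : ℕ) : altProd x y (n + 1) = x * altProd y x n := by
  unfold altProd
  rw [List.range_succ_eq_map, List.map_cons, List.prod_cons, List.map_map]
  congr 1
  congr 1
  refine List.map_congr_left fun i _ => ?_
  simp only [Function.comp_apply, Nat.succ_mod_two_eq_zero_iff]
  by_cases h : i % 2 = 0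
  · simp [h, Nat.mod_two_ne_one.mpr h]
  · have h1 : i % 2 = 1 := Nat.mod_two_ne_zero.mp h
    simp [h, h1]

theorem altProd_succ' (n : ℕ) :
    altProd x y (n + 1) = altProd x y n * (if n % 2 = 0 then x else y) := by
  unfold altProd
  rw [List.range_succ, List.map_append, List.prod_append]
  simp

@[simp] theorem altProd_one : altProd x y 1 = x := by
  rw [altProd_succ, altProd_zero, mul_one]

theorem map_altProd (f : G →* H) (n : ℕ) :
    f (altProd x y n) = altProd (f x) (f y) n := by
  unfold altProd
  rw [map_list_prod, List.map_map]
  refine congrArg _ (List.map_congr_left fun i _ => ?_)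
  simp only [Function.comp_apply]
  split <;> rfl

end AltProd

namespace DW
variable {m : ℕ}

def fl (m : ℕ) (b : Bool) : Bool := if m % 2 = 1 then !b else b

@[simp] theorem fl_fl (b : Bool) : fl m (fl m b) = b := by unfold fl; split <;> simp

@[simp] theorem fl_not (b : Bool) : fl m (!b) = !(fl m b) := by unfold fl; split <;> simp

def flipAtom (a : Atom m) : Atom m := ⟨(fl m a.1.1, a.1.2), a.2⟩

@[simp] theorem flipAtom_flipAtom (a : Atom m) : flipAtom (flipAtom a) = a := by
  unfold flipAtom; simp; rfl

def flipL (L : List (Atom m)) : List (Atom m) := L.map flipAtom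

@[simp] theorem flipL_nil : flipL ([] : List (Atom m)) = [] := rfl

@[simp] theorem flipL_cons (a : Atom m) (L : List (Atom m)) :
    flipL (a :: L) = flipAtom a :: flipL L := rfl

@[simp] theorem flipL_flipL (L : List (Atom m)) : flipL (flipL L) = L := by
  unfold flipL; rw [List.map_map]; simp [Function.comp_def]

theorem lastLetter_flipAtom (a : Atom m) : (flipAtom a).lastLetter = fl m a.lastLetter := by
  unfold flipAtom Atom.lastLetter
  dsimp only
  split <;> simp

theorem firstLetter_flipAtom (a : Atom m) : (flipAtom a).firstLetter = fl m a.firstLetter := rfl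

theorem lw_flipL {L : List (Atom m)} (h : LeftWeighted L) : LeftWeighted (flipL L) := by
  unfold LeftWeighted flipL at *
  simp only [List.Chain'] at *; rw [List.isChain_map]
  refine h.imp ?_
  intro a b hab
  rw [lastLetter_flipAtom, firstLetter_flipAtom, hab]

/-- Normal forms. -/
def NF (m : ℕ) : Type := {p : List (Atom m) × ℤ // LeftWeighted p.1}

variable (hm : 3 ≤ m)

/-- Raw left action of generator `b`. -/
def actP (b : Bool) (p : List (Atom m) × ℤ) : List (Atom m) × ℤ :=
  match p with
  | ([], l) => ([⟨(b, 1), le_refl 1, by omega⟩], l)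
  | (a :: L, l) =>
      if a.1.1 = b then (⟨(b, 1), le_refl 1, by omega⟩ :: a :: L, l)
      else if h : a.1.2 + 1 ≤ m - 1 then
        (⟨(b, a.1.2 + 1), by omega, h⟩ :: L, l)
      else (flipL L, l + 1)

/-- Raw left action of the inverse of generator `b`. -/
def actP' (b : Bool) (p : List (Atom m) × ℤ) : List (Atom m) × ℤ :=
  match p with
  | ([], l) => ([⟨(!b, m - 1), by omega, le_refl _⟩], l - 1)
  | (a :: L, l) =>
      if a.1.1 = b then
        if h : 2 ≤ a.1.2 then (⟨(!b, a.1.2 - 1), by omega, by have := a.2.2; omega⟩ :: L, l)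
        else (L, l)
      else (⟨(!b, m - 1), by omega, le_refl _⟩ :: flipL (a :: L), l - 1)

theorem lastLetter_mk (b : Bool) (k : ℕ) (h) :
    Atom.lastLetter (⟨(b, k), h⟩ : Atom m) = if k % 2 = 1 then b else !b := rfl

theorem firstLetter_mk (b : Bool) (k : ℕ) (h) :
    Atom.firstLetter (⟨(b, k), h⟩ : Atom m) = b := rfl

theorem actP_lw (b : Bool) (p : List (Atom m) × ℤ) (hp : LeftWeighted p.1) :
    LeftWeighted (actP hm b p).1 := by
  obtain ⟨L, l⟩ := p
  match L with
  | [] => simp [actP, LeftWeighted, List.Chain']; exact List.isChain_singleton _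
  | ⟨⟨c, j⟩, hj1, hj2⟩ :: L =>
      simp only [actP]
      split_ifs with h1 h2
      · refine List.isChain_cons_cons.mpr ⟨?_, hp⟩
        simp [lastLetter_mk, firstLetter_mk, h1]
      · unfold LeftWeighted at *
        simp only [List.Chain'] at hp ⊢; erw [List.isChain_cons] at hp ⊢
        refine ⟨fun y hy => ?_, hp.2⟩
        rw [← hp.1 y hy]
        have hc : c = !b := by revert h1; cases c <;> cases b <;> simp
        subst hc
        simp only [lastLetter_mk]
        rcases Nat.even_or_odd j with he | ho
        · have e0 : j % 2 = 0 := Nat.even_iff.mp he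
          have e1 : j % 2 ≠ 1 := by omega
          have e2 : (j + 1) % 2 = 1 := by omega
          simp [e1, e2]
        · have e1 : j % 2 = 1 := Nat.odd_iff.mp ho
          have e2 : (j + 1) % 2 ≠ 1 := by omega
          simp [e1, e2]
      · exact lw_flipL hp.tail

theorem actP'_lw (b : Bool) (p : List (Atom m) × ℤ) (hp : LeftWeighted p.1) :
    LeftWeighted (actP' hm b p).1 := by
  obtain ⟨L, l⟩ := p
  match L with
  | [] => simp [actP', LeftWeighted, List.Chain']; exact List.isChain_singleton _
  | ⟨⟨c, j⟩, hj1, hj2⟩ :: L =>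
      simp only [actP']
      split_ifs with h1 h2
      · unfold LeftWeighted at *
        simp only [List.Chain'] at hp ⊢; erw [List.isChain_cons] at hp ⊢
        refine ⟨fun y hy => ?_, hp.2⟩
        rw [← hp.1 y hy]
        subst h1
        simp only [lastLetter_mk]
        rcases Nat.even_or_odd j with he | ho
        · have e0 : j % 2 = 0 := Nat.even_iff.mp he
          have e1 : j % 2 ≠ 1 := by omega
          have e2 : (j - 1) % 2 = 1 := by omega
          simp [e1, e2]
        · have e1 : j % 2 = 1 := Nat.odd_iff.mp ho
          have e2 : (j - 1) % 2 ≠ 1 := by omega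
          simp [e1, e2]
      · exact hp.tail
      · refine List.isChain_cons_cons.mpr ⟨?_, lw_flipL hp⟩
        have hc : c = !b := by revert h1; cases c <;> cases b <;> simp
        subst hc
        show (if (m-1) % 2 = 1 then !b else !(!b)) = fl m (!b)
        unfold fl
        have : (m - 1) % 2 = 1 ↔ ¬ (m % 2 = 1) := by omega
        rcases Nat.even_or_odd m with he | ho
        · have e0 : m % 2 = 0 := Nat.even_iff.mp he
          have e1 : m % 2 ≠ 1 := by omega
          have e2 : (m - 1) % 2 = 1 := by omega
          simp [e1, e2]
        · have e1 : m % 2 = 1 := Nat.odd_iff.mp ho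
          have e2 : (m - 1) % 2 ≠ 1 := by omega
          simp [e1, e2]

theorem fl_lastLetter_pred (b : Bool) (h) :
    fl m (Atom.lastLetter (⟨(!b, m - 1), h⟩ : Atom m)) = !b := by
  rw [lastLetter_mk]
  unfold fl
  rcases Nat.even_or_odd m with he | ho
  · have e0 : m % 2 = 0 := Nat.even_iff.mp he
    have e1 : m % 2 ≠ 1 := by omega
    have e2 : (m - 1) % 2 = 1 := by have := h.1; omega
    simp [e1, e2]
  · have e1 : m % 2 = 1 := Nat.odd_iff.mp ho
    have e2 : (m - 1) % 2 ≠ 1 := by omega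
    simp [e1, e2]

theorem actP'_actP (b : Bool) (p : List (Atom m) × ℤ) (hp : LeftWeighted p.1) :
    actP' hm b (actP hm b p) = p := by
  obtain ⟨L, l⟩ := p
  match L with
  | [] => simp [actP, actP']
  | ⟨⟨c, j⟩, hj1, hj2⟩ :: L =>
      by_cases h1 : c = b
      · subst h1
        simp [actP, actP']
      · have hc : c = !b := by revert h1; cases c <;> cases b <;> simp
        subst hc
        by_cases h2 : j + 1 ≤ m - 1
        · simp only [actP]
          rw [if_neg (by simpa using h1), dif_pos h2]
          simp only [actP']
          rw [if_pos trivial, dif_pos (by omega)]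
          simp
        · have hj : j = m - 1 := by omega
          subst hj
          simp only [actP]
          rw [if_neg (by simpa using h1), dif_neg h2]
          match L with
          | [] =>
              simp only [flipL_nil, actP']
              simp
          | a2 :: L2 =>
              have hchain : Atom.lastLetter (⟨(!b, m-1), hj1, hj2⟩ : Atom m)
                  = a2.firstLetter := (List.isChain_cons_cons.mp hp).1
              have hfl : (flipAtom a2).1.1 = !b := by
                show (flipAtom a2).firstLetter = !b
                rw [firstLetter_flipAtom, ← hchain, fl_lastLetter_pred]
              simp only [flipL_cons, actP']
              rw [if_neg (by simp [hfl])]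
              simp only [flipAtom_flipAtom, flipL_flipL]
              congr 1
              omega

theorem actP_actP' (b : Bool) (p : List (Atom m) × ℤ) (hp : LeftWeighted p.1) :
    actP hm b (actP' hm b p) = p := by
  obtain ⟨L, l⟩ := p
  match L with
  | [] =>
      simp only [actP', actP]
      rw [if_neg (by simp), dif_neg (by omega)]
      simp
      try omega
  | ⟨⟨c, j⟩, hj1, hj2⟩ :: L =>
      by_cases h1 : c = b
      · subst h1
        by_cases h2 : 2 ≤ j
        · simp only [actP']
          rw [if_pos trivial, dif_pos h2]
          simp only [actP]
          rw [if_neg (by simp), dif_pos (by omega)]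
          have hj' : j - 1 + 1 = j := by omega
          simp [hj']
        · have hj : j = 1 := by omega
          subst hj
          simp only [actP']
          rw [if_pos trivial, dif_neg (by omega)]
          match L with
          | [] => simp [actP]
          | a2 :: L2 =>
              have hchain : Atom.lastLetter (⟨(c, 1), hj1, hj2⟩ : Atom m)
                  = a2.firstLetter := (List.isChain_cons_cons.mp hp).1
              have hfl : a2.1.1 = c := by
                rw [show a2.1.1 = a2.firstLetter from rfl, ← hchain, lastLetter_mk]
                simp
              simp only [actP]
              rw [if_pos hfl]
      · have hc : c = !b := by revert h1; cases c <;> cases b <;> simp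
        subst hc
        simp only [actP']
        rw [if_neg (by simpa using h1)]
        simp only [actP]
        rw [if_neg (by simp), dif_neg (by omega)]
        simp only [flipL_cons, flipAtom_flipAtom, flipL_flipL]
        congr 1
        omega

/-- The action of generator `b` on normal forms. -/
def act (b : Bool) (n : NF m) : NF m := ⟨actP hm b n.1, actP_lw hm b n.1 n.2⟩

/-- The action of the inverse of generator `b` on normal forms. -/
def act' (b : Bool) (n : NF m) : NF m := ⟨actP' hm b n.1, actP'_lw hm b n.1 n.2⟩

/-- The action of generator `b` as a permutation of normal forms. -/
def actEquiv (b : Bool) : Equiv.Perm (NF m) where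
  toFun := act hm b
  invFun := act' hm b
  left_inv := fun n => Subtype.ext (actP'_actP hm b n.1 n.2)
  right_inv := fun n => Subtype.ext (actP_actP' hm b n.1 n.2)

/-- Iterated alternating action: `actA b j` is left multiplication by the alternating
word of length `j` starting with `b`. -/
def actA (b : Bool) : ℕ → NF m → NF m
  | 0, n => n
  | j + 1, n => act hm b (actA (!b) j n)

/-- Closed form for the iterated action. -/
def cfRaw (b : Bool) (j : ℕ) (hj1 : 1 ≤ j) (hj2 : j ≤ m - 1) :
    List (Atom m) × ℤ → List (Atom m) × ℤ
  | ([], l) => ([⟨(b, j), hj1, hj2⟩], l)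
  | (a :: L, l) =>
      if a.1.1 = (if j % 2 = 1 then b else !b) then (⟨(b, j), hj1, hj2⟩ :: a :: L, l)
      else if h : j + a.1.2 ≤ m - 1 then (⟨(b, j + a.1.2), by omega, h⟩ :: L, l)
      else if h2 : j + a.1.2 = m then (flipL L, l + 1)
      else (⟨(b, j + a.1.2 - m), by have := a.2.1; omega,
              by have := a.2.2; omega⟩ :: flipL L, l + 1)

theorem atom_eq (b : Bool) (x y : ℕ) (hx) (hy) (h : x = y) :
    (⟨(b, x), hx⟩ : Atom m) = ⟨(b, y), hy⟩ := by subst h; rfl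

theorem pair_cons_eq {L L' : List (Atom m)} {l : ℤ} (b : Bool) (x y : ℕ) (hx) (hy)
    (h : x = y) (hL : L = L') :
    ((⟨(b, x), hx⟩ : Atom m) :: L, l) = ((⟨(b, y), hy⟩ : Atom m) :: L', l) := by
  subst h; subst hL; rfl

theorem iteParity (j : ℕ) (x : Bool) :
    (if (j + 1) % 2 = 1 then x else !x) = if j % 2 = 1 then !x else x := by
  rcases Nat.even_or_odd j with he | ho
  · have e0 : j % 2 = 0 := Nat.even_iff.mp he
    have e1 : j % 2 ≠ 1 := by omega
    have e2 : (j + 1) % 2 = 1 := by omega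
    simp [e1, e2]
  · have e1 : j % 2 = 1 := Nat.odd_iff.mp ho
    have e2 : (j + 1) % 2 ≠ 1 := by omega
    simp [e1, e2]

theorem fl_last_eq (b c : Bool) (j j' : ℕ) (hsum : j + j' = m)
    (hc : c ≠ (if j % 2 = 1 then !b else b)) :
    fl m (if j' % 2 = 1 then c else !c) = b := by
  have hj := Nat.even_or_odd j
  have hj' := Nat.even_or_odd j'
  rcases hj with he | ho <;> rcases hj' with he' | ho'
  · have e0 : j % 2 = 0 := Nat.even_iff.mp he
    have e0' : j' % 2 = 0 := Nat.even_iff.mp he'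
    have em : m % 2 = 0 := by omega
    cases b <;> cases c <;> simp_all [fl]
  · have e0 : j % 2 = 0 := Nat.even_iff.mp he
    have e0' : j' % 2 = 1 := Nat.odd_iff.mp ho'
    have em : m % 2 = 1 := by omega
    cases b <;> cases c <;> simp_all [fl]
  · have e0 : j % 2 = 1 := Nat.odd_iff.mp ho
    have e0' : j' % 2 = 0 := Nat.even_iff.mp he'
    have em : m % 2 = 1 := by omega
    cases b <;> cases c <;> simp_all [fl]
  · have e0 : j % 2 = 1 := Nat.odd_iff.mp ho
    have e0' : j' % 2 = 1 := Nat.odd_iff.mp ho'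
    have em : m % 2 = 0 := by omega
    cases b <;> cases c <;> simp_all [fl]

theorem actA_eq_cfRaw (j : ℕ) (hj1 : 1 ≤ j) : ∀ (b : Bool) (hj2 : j ≤ m - 1) (n : NF m),
    (actA hm b j n).1 = cfRaw hm b j hj1 hj2 n.1 := by
  induction j, hj1 using Nat.le_induction with
  | base =>
      intro b hj2 n
      obtain ⟨⟨L, l⟩, hLW⟩ := n
      show actP hm b (L, l) = _
      match L with
      | [] =>
          simp only [actP, cfRaw]
      | ⟨⟨c, j'⟩, h1', h2'⟩ :: L =>
          simp only [actP, cfRaw]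
          norm_num
          by_cases hc : c = b
          · rw [if_pos hc, if_pos hc]
          · rw [if_neg hc, if_neg hc]
            by_cases hs : j' + 1 ≤ m - 1
            · rw [dif_pos (by omega : j' < m - 1), dif_pos (by omega : 1 + j' ≤ m - 1)]
              exact pair_cons_eq b _ _ _ _ (by omega) rfl
            · rw [dif_neg (by omega : ¬ j' < m - 1), dif_neg (by omega : ¬ 1 + j' ≤ m - 1),
                dif_pos (by omega : 1 + j' = m)]
  | succ j hj ih =>
      intro b hj2 n
      obtain ⟨⟨L, l⟩, hLW⟩ := n
      have hstep : (actA hm b (j + 1) ⟨(L, l), hLW⟩).1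
          = actP hm b (cfRaw hm (!b) j hj (by omega) (L, l)) := by
        show actP hm b ((actA hm (!b) j ⟨(L, l), hLW⟩)).1 = _
        exact congrArg (actP hm b) (ih (!b) (by omega) _)
      rw [hstep]
      match L, hLW with
      | [], _ =>
          simp only [cfRaw, actP]
          rw [if_neg (by simp), dif_pos (by omega)]
      | ⟨⟨c, j'⟩, h1', h2'⟩ :: L, hLW =>
          by_cases hc : c = (if j % 2 = 1 then !b else b)
          · -- left-weighted extension
            simp only [cfRaw]
            rw [if_pos (by simpa using hc)]
            simp only [actP]
            rw [if_neg (by simp), dif_pos (by omega),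
              if_pos (show c = _ by rw [iteParity]; exact hc)]
          · have hc2 : ¬ (c = (if j % 2 = 1 then !b else !(!b))) := by
              simpa using hc
            have hc3 : ¬ (c = (if (j + 1) % 2 = 1 then b else !b)) := by
              rw [iteParity]; exact hc
            simp only [cfRaw]
            rw [if_neg hc2, if_neg hc3]
            by_cases hs1 : j + j' ≤ m - 1
            · rw [dif_pos hs1]
              simp only [actP]
              rw [if_neg (by simp)]
              by_cases hss : j + j' + 1 ≤ m - 1
              · rw [dif_pos hss, dif_pos (by omega)]
                exact pair_cons_eq b _ _ _ _ (by omega) rfl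
              · rw [dif_neg hss, dif_neg (by omega), dif_pos (by omega)]
            · rw [dif_neg hs1]
              by_cases hs2 : j + j' = m
              · rw [dif_pos hs2, dif_neg (by omega), dif_neg (by omega)]
                match L, hLW with
                | [], _ =>
                    simp only [flipL_nil, actP]
                    exact pair_cons_eq b _ _ _ _ (by omega) rfl
                | a2 :: L2, hLW =>
                    have hchain : Atom.lastLetter (⟨(c, j'), h1', h2'⟩ : Atom m)
                        = a2.firstLetter := (List.isChain_cons_cons.mp hLW).1
                    have hfl : (flipAtom a2).1.1 = b := by
                      show (flipAtom a2).firstLetter = b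
                      rw [firstLetter_flipAtom, ← hchain]
                      exact fl_last_eq b c j j' hs2 hc
                    simp only [flipL_cons, actP]
                    rw [if_pos hfl]
                    exact pair_cons_eq b _ _ _ _ (by omega) rfl
              · rw [dif_neg hs2, dif_neg (by omega), dif_neg (by omega)]
                simp only [actP]
                rw [if_neg (by simp), dif_pos (by have := h2'; omega)]
                exact pair_cons_eq b _ _ _ _ (by omega) rfl

/-! ### Group-level lemmas in the dihedral Artin group -/

theorem garside_def : garside m = altProd (DihedralArtin.gen m true) (DihedralArtin.gen m false) m := rfl

theorem rel_tst :
    altProd (DihedralArtin.gen m false) (DihedralArtin.gen m true) m = garside m := by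
  have h : (PresentedGroup.mk (dihedralRels m))
      (altProd (FreeGroup.of true) (FreeGroup.of false) m *
        (altProd (FreeGroup.of false) (FreeGroup.of true) m)⁻¹) = 1 := by
    apply (QuotientGroup.eq_one_iff _).mpr
    exact Subgroup.subset_normalClosure (Set.mem_singleton _)
  rw [map_mul, map_inv, map_altProd, map_altProd, mul_inv_eq_one] at h
  exact h.symm

theorem delta_mul_gen (b : Bool) :
    garside m * DihedralArtin.gen m b = DihedralArtin.gen m (fl m b) * garside m := by
  set s := DihedralArtin.gen m true with hs
  set t := DihedralArtin.gen m false with ht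
  by_cases hp : m % 2 = 0
  · have hfl : fl m b = b := by unfold fl; simp [hp]
    rw [hfl]
    cases b
    · -- t
      have h1 : altProd t s (m + 1) = garside m * t := by
        rw [altProd_succ', if_pos hp, rel_tst]
      have h2 : altProd t s (m + 1) = t * garside m := by
        rw [altProd_succ, ← garside_def]
      rw [← h1, h2]
    · have h1 : altProd s t (m + 1) = garside m * s := by
        rw [altProd_succ', if_pos hp, ← garside_def]
      have h2 : altProd s t (m + 1) = s * garside m := by
        rw [altProd_succ, rel_tst]
      rw [← h1, h2]
  · have hp1 : m % 2 = 1 := by omega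
    have hfl : fl m b = !b := by unfold fl; simp [hp1]
    rw [hfl]
    cases b
    · -- Δ * t = s * Δ
      have h1 : altProd s t (m + 1) = garside m * t := by
        rw [altProd_succ', if_neg (by omega), ← garside_def]
      have h2 : altProd s t (m + 1) = s * garside m := by
        rw [altProd_succ, rel_tst]
      rw [← h1, h2]
      rfl
    · -- Δ * s = t * Δ
      have h1 : altProd t s (m + 1) = garside m * s := by
        rw [altProd_succ', if_neg (by omega), rel_tst]
      have h2 : altProd t s (m + 1) = t * garside m := by
        rw [altProd_succ, ← garside_def]
      rw [← h1, h2]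
      rfl

theorem delta_comm_altProd (b c : Bool) (k : ℕ) :
    garside m * altProd (DihedralArtin.gen m b) (DihedralArtin.gen m c) k
      = altProd (DihedralArtin.gen m (fl m b)) (DihedralArtin.gen m (fl m c)) k * garside m := by
  induction k generalizing b c with
  | zero => simp
  | succ k ih =>
      rw [altProd_succ, altProd_succ, ← mul_assoc, delta_mul_gen, mul_assoc, ih c b,
        ← mul_assoc, mul_assoc]

theorem elem_mk (c : Bool) (k : ℕ) (h) :
    Atom.elem (⟨(c, k), h⟩ : Atom m)
      = altProd (DihedralArtin.gen m c) (DihedralArtin.gen m (!c)) k := rfl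

theorem elem_one (b : Bool) (h) :
    Atom.elem (⟨(b, 1), h⟩ : Atom m) = DihedralArtin.gen m b := by
  rw [elem_mk, altProd_one]

theorem elem_succ (b : Bool) (k : ℕ) (h h') :
    Atom.elem (⟨(b, k + 1), h⟩ : Atom m)
      = DihedralArtin.gen m b * Atom.elem (⟨(!b, k), h'⟩ : Atom m) := by
  rw [elem_mk, elem_mk, altProd_succ, Bool.not_not]

theorem delta_mul_elem (a : Atom m) :
    garside m * a.elem = (flipAtom a).elem * garside m := by
  obtain ⟨⟨c, k⟩, hk⟩ := a
  rw [elem_mk, delta_comm_altProd]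
  show _ = Atom.elem (⟨(fl m c, k), hk⟩ : Atom m) * garside m
  rw [elem_mk, fl_not]

theorem delta_mul_prod (L : List (Atom m)) :
    garside m * (L.map Atom.elem).prod = ((flipL L).map Atom.elem).prod * garside m := by
  induction L with
  | nil => simp
  | cons a L ih =>
      rw [List.map_cons, List.prod_cons, flipL_cons, List.map_cons, List.prod_cons,
        ← mul_assoc, delta_mul_elem, mul_assoc, ih, ← mul_assoc]

theorem gen_mul_elem_delta (b : Bool) (h) :
    DihedralArtin.gen m b * Atom.elem (⟨(!b, m - 1), h⟩ : Atom m) = garside m := by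
  rw [elem_mk, Bool.not_not]
  have hm1 : m - 1 + 1 = m := by omega
  have := altProd_succ (DihedralArtin.gen m b) (DihedralArtin.gen m (!b)) (m - 1)
  rw [hm1] at this
  rw [← this]
  cases b
  · exact rel_tst
  · rfl

/-- The image of a raw pair in the dihedral Artin group. -/
def piRaw (p : List (Atom m) × ℤ) : DihedralArtin m :=
  (p.1.map Atom.elem).prod * garside m ^ p.2

theorem piRaw_actP (b : Bool) (p : List (Atom m) × ℤ) :
    piRaw (actP hm b p) = DihedralArtin.gen m b * piRaw p := by
  obtain ⟨L, l⟩ := p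
  match L with
  | [] =>
      simp only [actP, piRaw, List.map_cons, List.map_nil, List.prod_cons, List.prod_nil,
        elem_one, mul_one, one_mul]
      exact congrArg (· * garside m ^ l) ((mul_one _).trans (elem_one b _))
  | ⟨⟨c, j⟩, hj1, hj2⟩ :: L =>
      by_cases h1 : c = b
      · subst h1
        simp only [actP, if_true, piRaw, List.map_cons, List.prod_cons, elem_one]
        erw [List.map_cons, List.prod_cons, elem_one]
        group
      · have hc : c = !b := by revert h1; cases c <;> cases b <;> simp
        subst hc
        simp only [actP]
        rw [if_neg h1]
        by_cases h2 : j + 1 ≤ m - 1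
        · rw [dif_pos h2]
          simp only [piRaw, List.map_cons, List.prod_cons]
          erw [List.map_cons, List.prod_cons, List.map_cons, List.prod_cons]
          rw [elem_succ b j _ ⟨hj1, hj2⟩]
          group
        · rw [dif_neg h2]
          have hj : j = m - 1 := by omega
          subst hj
          simp only [piRaw, List.map_cons, List.prod_cons]
          erw [List.map_cons, List.prod_cons]
          rw [← mul_assoc, ← mul_assoc, gen_mul_elem_delta b ⟨hj1, hj2⟩, delta_mul_prod,
            mul_assoc, ← zpow_one_add]
          congr 2
          omega

/-! ### The action of the Garside element and the braid relation -/

theorem fl_of_ne (b c : Bool) (hm : 3 ≤ m)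
    (hc : c ≠ (if (m - 1) % 2 = 1 then !b else b)) : fl m c = b := by
  rcases Nat.even_or_odd m with he | ho
  · have e0 : m % 2 = 0 := Nat.even_iff.mp he
    have e1 : (m - 1) % 2 = 1 := by omega
    cases b <;> cases c <;> simp_all [fl]
  · have e0 : m % 2 = 1 := Nat.odd_iff.mp ho
    have e1 : (m - 1) % 2 ≠ 1 := by omega
    cases b <;> cases c <;> simp_all [fl]

theorem actA_delta (b : Bool) (n : NF m) :
    (actA hm b m n).1 = (flipL n.1.1, n.1.2 + 1) := by
  obtain ⟨⟨L, l⟩, hLW⟩ := n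
  have h2 : m = (m - 1) + 1 := by omega
  have hidx := congrArg (fun k => (actA hm b k (⟨(L, l), hLW⟩ : NF m)).1) h2
  rw [hidx]
  show actP hm b ((actA hm (!b) (m - 1) (⟨(L, l), hLW⟩ : NF m))).1 = _
  erw [actA_eq_cfRaw hm (m - 1) (by omega) (!b) (le_refl _)]
  match L, hLW with
  | [], _ =>
      simp only [cfRaw, actP]
      rw [if_neg (by simp), dif_neg (by omega)]
  | ⟨⟨c, j'⟩, h1', h2'⟩ :: L, hLW =>
      by_cases hc : c = (if (m - 1) % 2 = 1 then !b else b)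
      · simp only [cfRaw]
        rw [if_pos (by simpa using hc)]
        simp only [actP]
        rw [if_neg (by simp), dif_neg (by omega)]
      · have hc2 : ¬ (c = (if (m - 1) % 2 = 1 then !b else !(!b))) := by simpa using hc
        have hflc : fl m c = b := fl_of_ne b c hm hc
        simp only [cfRaw]
        rw [if_neg hc2, dif_neg (by omega)]
        by_cases hj1 : j' = 1
        · subst hj1
          rw [dif_pos (by omega)]
          match L, hLW with
          | [], _ =>
              simp only [flipL_nil, actP, flipL_cons]
              show _ = ((⟨(fl m c, 1), _⟩ : Atom m) :: flipL [], l + 1)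
              rw [hflc]
              simp [flipL]
              rfl
          | a2 :: L2, hLW =>
              have hchain : Atom.lastLetter (⟨(c, 1), h1', h2'⟩ : Atom m)
                  = a2.firstLetter := (List.isChain_cons_cons.mp hLW).1
              have ha2 : (flipAtom a2).1.1 = b := by
                show (flipAtom a2).firstLetter = b
                rw [firstLetter_flipAtom, ← hchain, lastLetter_mk, if_pos (by norm_num), hflc]
              simp only [flipL_cons, actP]
              rw [if_pos ha2]
              show _ = ((⟨(fl m c, 1), _⟩ : Atom m) :: flipAtom a2 :: flipL L2, l + 1)
              rw [hflc]
              rfl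
        · rw [dif_neg (by omega)]
          simp only [actP]
          rw [if_neg (by simp), dif_pos (by omega)]
          show _ = ((⟨(fl m c, j'), h1', h2'⟩ : Atom m) :: flipL L, l + 1)
          rw [hflc]
          exact pair_cons_eq b _ _ _ _ (by omega) rfl

theorem altProd_actEquiv_apply (b : Bool) (j : ℕ) : ∀ n : NF m,
    (altProd (actEquiv hm b) (actEquiv hm (!b)) j) n = actA hm b j n := by
  induction j generalizing b with
  | zero => intro n; rfl
  | succ j ih =>
      intro n
      rw [altProd_succ, Equiv.Perm.mul_apply]
      show actEquiv hm b ((altProd (actEquiv hm (!b)) (actEquiv hm b) j) n) = _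
      have h := ih (!b) n
      rw [Bool.not_not] at h
      rw [h]
      rfl

theorem braid_perm :
    altProd (actEquiv hm true) (actEquiv hm false) m
      = altProd (actEquiv hm false) (actEquiv hm true) m := by
  apply Equiv.ext
  intro n
  have h1 := altProd_actEquiv_apply hm true m n
  have h2 := altProd_actEquiv_apply hm false m n
  simp only [Bool.not_true, Bool.not_false] at h1 h2
  rw [h1, h2]
  exact Subtype.ext ((actA_delta hm true n).trans (actA_delta hm false n).symm)

/-! ### The homomorphism into permutations of normal forms -/

/-- The dihedral Artin group acts on normal forms. -/
def F : DihedralArtin m →* Equiv.Perm (NF m) :=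
  PresentedGroup.toGroup (f := fun b => actEquiv hm b) (by
    intro r hr
    rw [dihedralRels, Set.mem_singleton_iff] at hr
    subst hr
    rw [map_mul, map_inv, map_altProd, map_altProd]
    simp only [FreeGroup.lift_apply_of]
    rw [mul_inv_eq_one]
    exact braid_perm hm)

theorem F_gen (b : Bool) : F hm (DihedralArtin.gen m b) = actEquiv hm b :=
  PresentedGroup.toGroup.of _

theorem F_equivariant (g : DihedralArtin m) :
    ∀ n : NF m, piRaw ((F hm g) n).1 = g * piRaw n.1 := by
  let H : Subgroup (DihedralArtin m) :=
    { carrier := {g | ∀ n : NF m, piRaw ((F hm g) n).1 = g * piRaw n.1}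
      mul_mem' := by
        intro a b ha hb n
        rw [map_mul, Equiv.Perm.mul_apply, ha, hb, mul_assoc]
      one_mem' := by
        intro n
        rw [map_one, Equiv.Perm.one_apply, one_mul]
      inv_mem' := by
        intro x hx n
        have h := hx ((F hm x⁻¹) n)
        rw [show (F hm x) ((F hm x⁻¹) n) = n by rw [map_inv]; exact Equiv.apply_symm_apply _ n]
          at h
        rw [eq_inv_mul_iff_mul_eq]
        exact h.symm }
  exact PresentedGroup.generated_by _ H
    (fun b n => by
      show piRaw ((F hm (DihedralArtin.gen m b)) n).1 = DihedralArtin.gen m b * piRaw n.1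
      rw [F_gen]
      exact piRaw_actP hm b n.1) g

/-- The base normal form. -/
def baseNF (k : ℤ) : NF m := ⟨([], k), List.isChain_nil⟩

theorem F_delta_apply (n : NF m) :
    ((F hm (garside m)) n).1 = (flipL n.1.1, n.1.2 + 1) := by
  rw [garside_def, map_altProd, F_gen, F_gen]
  have h := altProd_actEquiv_apply hm true m n
  simp only [Bool.not_true] at h
  rw [h]
  exact actA_delta hm true n

theorem F_delta_base (k : ℤ) :
    (F hm (garside m)) (baseNF k) = (baseNF (k + 1) : NF m) :=
  Subtype.ext (F_delta_apply hm (baseNF k))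

theorem F_delta_zpow (l : ℤ) : ∀ k : ℤ,
    (F hm (garside m ^ l)) (baseNF k) = (baseNF (k + l) : NF m) := by
  induction l using Int.induction_on with
  | zero => intro k; simp [baseNF]; rfl
  | succ i ih =>
      intro k
      rw [zpow_add_one, map_mul, Equiv.Perm.mul_apply, F_delta_base, ih]
      exact congrArg baseNF (by omega)
  | pred i ih =>
      intro k
      rw [zpow_sub_one, map_mul, Equiv.Perm.mul_apply, map_inv, Equiv.Perm.inv_def]
      have hsymm : (((F hm) (garside m)).symm) (baseNF k) = (baseNF (k - 1) : NF m) := by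
        rw [Equiv.symm_apply_eq, F_delta_base]
        exact congrArg baseNF (by omega)
      rw [hsymm, ih]
      exact congrArg baseNF (by omega)

theorem F_elem_apply (a : Atom m) (n : NF m) :
    (F hm (Atom.elem a)) n = actA hm a.1.1 a.1.2 n := by
  obtain ⟨⟨c, k⟩, hk⟩ := a
  rw [elem_mk, map_altProd, F_gen, F_gen]
  exact altProd_actEquiv_apply hm c k n

theorem recon_list (L : List (Atom m)) : ∀ (l : ℤ) (hLW : LeftWeighted L),
    (F hm ((L.map Atom.elem).prod)) (baseNF l) = (⟨(L, l), hLW⟩ : NF m) := by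
  induction L with
  | nil =>
      intro l hLW
      rw [List.map_nil, List.prod_nil, map_one, Equiv.Perm.one_apply]
      rfl
  | cons a L ih =>
      intro l hLW
      rw [List.map_cons, List.prod_cons, map_mul, Equiv.Perm.mul_apply, ih l hLW.tail]
      erw [F_elem_apply]
      apply Subtype.ext
      obtain ⟨⟨c, k⟩, hk1, hk2⟩ := a
      erw [actA_eq_cfRaw hm k hk1 c hk2]
      match L, hLW with
      | [], _ => simp only [cfRaw]
      | a2 :: L2, hLW =>
          have hchain : Atom.lastLetter (⟨(c, k), hk1, hk2⟩ : Atom m)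
              = a2.firstLetter := (List.isChain_cons_cons.mp hLW).1
          simp only [cfRaw]
          rw [if_pos (show (a2.1).1 = (if k % 2 = 1 then c else !c) from hchain.symm)]

theorem recon (L : List (Atom m)) (l : ℤ) (hLW : LeftWeighted L) :
    (F hm (piRaw (L, l))) (baseNF 0) = (⟨(L, l), hLW⟩ : NF m) := by
  show (F hm ((L.map Atom.elem).prod * garside m ^ l)) (baseNF 0) = _
  rw [map_mul, Equiv.Perm.mul_apply, F_delta_zpow hm l 0,
    show ((0 : ℤ) + l) = l by omega, recon_list hm L l hLW]

end DW

/-- Garside normal form: every element of the dihedral Artin group `A_m` (`m ≥ 3`) can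
be written in exactly one way as `w₁ w₂ ⋯ w_k Δ^ℓ` where the `wᵢ` are atoms forming a
left-weighted sequence and `ℓ ∈ ℤ`. -/
theorem dihedralArtin_garside_normal_form (m : ℕ) (hm : 3 ≤ m) (g : DihedralArtin m) :
    ∃! p : List (Atom m) × ℤ,
      LeftWeighted p.1 ∧ g = (p.1.map Atom.elem).prod * garside m ^ p.2 := by
  refine ⟨((DW.F hm g) (DW.baseNF 0)).1, ⟨((DW.F hm g) (DW.baseNF 0)).2, ?_⟩, ?_⟩
  · have h := DW.F_equivariant hm g (DW.baseNF 0)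
    have hbase : DW.piRaw ((DW.baseNF 0 : DW.NF m)).1 = 1 := by
      show (List.map Atom.elem []).prod * garside m ^ (0 : ℤ) = 1
      simp
    rw [hbase, mul_one] at h
    exact h.symm
  · rintro ⟨L, l⟩ ⟨hLW, hg⟩
    have hrec := DW.recon hm L l hLW
    have hgp : g = DW.piRaw (L, l) := hg
    rw [← hgp] at hrec
    exact (congrArg Subtype.val hrec).symm
end

section
/- Let k be a natural number and let G = ℤ × F_k, the direct product of the integers with the free group of rank k. Then G satisfies Wise's Power Alternative: for every pair of elements a, b ∈ G there exists an integer n ≥ 1 such that either aⁿ and bⁿ commute, or aⁿ and bⁿ freely generate a free subgroup of rank 2. -/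
open Function Cardinal

lemma exists_perm_extend {β : Type*} [Fintype β] [DecidableEq β] (s : Set β) (f : β → β)
    (hf : Set.InjOn f s) : ∃ σ : Equiv.Perm β, ∀ x ∈ s, σ x = f x := by
  classical
  obtain ⟨e₁, he₁⟩ : ∃ e : s ≃ (f '' s : Set β), ∀ x (hx : x ∈ s), (e ⟨x, hx⟩ : β) = f x :=
    ⟨Equiv.Set.imageOfInjOn f s hf, fun x hx => rfl⟩
  have h1 : Fintype.card s = Fintype.card (f '' s : Set β) := Fintype.card_congr e₁
  have hcard : Fintype.card (sᶜ : Set β) = Fintype.card ((f '' s)ᶜ : Set β) := by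
    rw [Fintype.card_compl_set, Fintype.card_compl_set, h1]
  have e₂ : (sᶜ : Set β) ≃ ((f '' s)ᶜ : Set β) := Fintype.equivOfCardEq hcard
  refine ⟨(Equiv.Set.sumCompl s).symm.trans ((e₁.sumCongr e₂).trans (Equiv.Set.sumCompl (f '' s))), ?_⟩
  intro x hx
  rw [Equiv.trans_apply, Equiv.trans_apply, Equiv.Set.sumCompl_symm_apply_of_mem hx,
    Equiv.sumCongr_apply, Sum.map_inl, Equiv.Set.sumCompl_apply_inl]
  exact he₁ x hx

lemma reduced_no_adj {α : Type*} [DecidableEq α] {L : List (α × Bool)}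
    (hL : FreeGroup.reduce L = L) {p : ℕ} (hp : p + 1 < L.length) {x : α} {b : Bool}
    (h1 : L[p] = (x, b)) (h2 : L[p+1] = (x, !b)) : False := by
  have hp' : p < L.length := by omega
  have hdecomp : FreeGroup.reduce L = L.take p ++ (x, b) :: (x, !b) :: L.drop (p+2) := by
    rw [hL]
    conv_lhs => rw [← List.take_append_drop p L]
    rw [List.drop_eq_getElem_cons hp', List.drop_eq_getElem_cons hp, h1, h2]
  exact FreeGroup.reduce.not hdecomp

lemma freeGroup_detect {α : Type*} [DecidableEq α] (w : FreeGroup α) (hw : w ≠ 1) :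
    ∃ n : ℕ, 0 < n ∧ ∃ π : FreeGroup α →* Equiv.Perm (Fin (n+1)), π w ≠ 1 := by
  classical
  set L := w.toWord with hLdef
  have hred : FreeGroup.reduce L = L := FreeGroup.reduce_toWord w
  set n := L.length with hn
  have hn1 : 0 < n := by
    rcases Nat.eq_zero_or_pos n with h | h
    · exfalso; apply hw; rw [← FreeGroup.toWord_eq_nil_iff]
      exact List.length_eq_zero_iff.mp h
    · exact h
  refine ⟨n, hn1, ?_⟩
  have key : ∀ i : α, ∃ σ : Equiv.Perm (Fin (n+1)),
      (∀ (p : ℕ) (hp : p < n), L[p]'hp = (i, true) →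
        σ ⟨n-1-p, by omega⟩ = ⟨n-p, by omega⟩) ∧
      (∀ (p : ℕ) (hp : p < n), L[p]'hp = (i, false) →
        σ ⟨n-p, by omega⟩ = ⟨n-1-p, by omega⟩) := by
    intro i
    set Up : Fin (n+1) → Prop := fun q => (q : ℕ) < n ∧ L[n-1-(q:ℕ)]? = some (i, true) with hUp
    set Down : Fin (n+1) → Prop := fun q => 0 < (q : ℕ) ∧ L[n-(q:ℕ)]? = some (i, false) with hDown
    have hdisj : ∀ q : Fin (n+1), Up q → Down q → False := by
      rintro q ⟨hq1, hq2⟩ ⟨hq3, hq4⟩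
      obtain ⟨hb2, he2⟩ := List.getElem?_eq_some_iff.mp hq2
      obtain ⟨hb4, he4⟩ := List.getElem?_eq_some_iff.mp hq4
      refine reduced_no_adj hred (p := n-1-(q:ℕ)) (by omega) (x := i) (b := true) he2 ?_
      have h5 : L[n-1-(q:ℕ)+1]'(by omega) = (i, false) := by
        have hnq : n-1-(q:ℕ)+1 = n - (q:ℕ) := by omega
        simp only [hnq]; exact he4
      simpa using h5
    set f : Fin (n+1) → Fin (n+1) := fun q =>
      if h : Up q then ⟨(q:ℕ)+1, by omega⟩
      else if h' : Down q then ⟨(q:ℕ)-1, by omega⟩ else q with hf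
    set s : Set (Fin (n+1)) := {q | Up q ∨ Down q} with hs
    have hfval : ∀ q ∈ s, (Up q ∧ (f q : ℕ) = (q:ℕ)+1) ∨ (Down q ∧ ¬ Up q ∧ (f q : ℕ) = (q:ℕ)-1) := by
      intro q hq
      by_cases h : Up q
      · left; exact ⟨h, by simp only [hf, dif_pos h]⟩
      · right
        rcases hq with h' | h'
        · exact absurd h' h
        · exact ⟨h', h, by simp only [hf, dif_neg h, dif_pos h']⟩
    have hmixed : ∀ q q' : Fin (n+1), Up q → Down q' → (q':ℕ) = (q:ℕ) + 2 → False := by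
      rintro q q' ⟨hq1, hq2⟩ ⟨hq3, hq4⟩ he
      obtain ⟨hb2, he2⟩ := List.getElem?_eq_some_iff.mp hq2
      obtain ⟨hb4, he4⟩ := List.getElem?_eq_some_iff.mp hq4
      refine reduced_no_adj hred (p := n - (q':ℕ)) (by omega) (x := i) (b := false) he4 ?_
      have h5 : L[n-(q':ℕ)+1]'(by omega) = (i, true) := by
        have hnq : n-(q':ℕ)+1 = n-1-(q:ℕ) := by omega
        simp only [hnq]; exact he2
      simpa using h5
    have hinj : Set.InjOn f s := by
      intro q hq q' hq' heq
      have hv : (f q : ℕ) = (f q' : ℕ) := by rw [heq]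
      rcases hfval q hq with ⟨⟨hlt, hget⟩, hval⟩ | ⟨hdown, hnup, hval⟩ <;>
        rcases hfval q' hq' with ⟨⟨hlt', hget'⟩, hval'⟩ | ⟨hdown', hnup', hval'⟩
      · apply Fin.ext; omega
      · exfalso
        have h0' : 0 < (q':ℕ) := hdown'.1
        exact hmixed q q' ⟨hlt, hget⟩ hdown' (by omega)
      · exfalso
        have h0 : 0 < (q:ℕ) := hdown.1
        exact hmixed q' q ⟨hlt', hget'⟩ hdown (by omega)
      · have h0 : 0 < (q:ℕ) := hdown.1
        have h0' : 0 < (q':ℕ) := hdown'.1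
        apply Fin.ext; omega
    obtain ⟨σ, hσ⟩ := exists_perm_extend s f hinj
    refine ⟨σ, ?_, ?_⟩
    · intro p hp hLp
      have hup : Up ⟨n-1-p, by omega⟩ := by
        refine ⟨by simpa using by omega, ?_⟩
        have h5 : n-1-(n-1-p) = p := by omega
        simp only [h5]
        exact List.getElem?_eq_some_iff.mpr ⟨hp, hLp⟩
      rw [hσ _ (Or.inl hup)]
      simp only [hf, dif_pos hup]
      exact Fin.mk_eq_mk.mpr (by omega)
    · intro p hp hLp
      have hdown : Down ⟨n-p, by omega⟩ := by
        refine ⟨by simpa using by omega, ?_⟩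
        have h5 : n-(n-p) = p := by omega
        simp only [h5]
        exact List.getElem?_eq_some_iff.mpr ⟨hp, hLp⟩
      have hnup : ¬ Up ⟨n-p, by omega⟩ := fun hup => hdisj _ hup hdown
      rw [hσ _ (Or.inr hdown)]
      simp only [hf, dif_neg hnup, dif_pos hdown]
      exact Fin.mk_eq_mk.mpr (by omega)
  choose σ hσup hσdown using key
  refine ⟨FreeGroup.lift σ, ?_⟩
  set F : α × Bool → Equiv.Perm (Fin (n+1)) := fun x => cond x.2 (σ x.1) (σ x.1)⁻¹ with hF
  have hinv : ∀ d (hd : d ≤ n), ∀ p (hp : p + d = n),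
      (((L.drop p).map F).prod) ⟨0, by omega⟩ = ⟨d, by omega⟩ := by
    intro d
    induction d with
    | zero =>
      intro _ p hp
      have hpl : p = L.length := by omega
      subst hpl
      rw [List.drop_length]
      simp
    | succ d ih =>
      intro hd p hp
      have hpn : p < n := by omega
      have hpl : p < L.length := by omega
      rw [List.drop_eq_getElem_cons hpl, List.map_cons, List.prod_cons,
        Equiv.Perm.mul_apply, ih (by omega) (p+1) (by omega)]
      rcases hb : (L[p]'hpl).2 with _ | _
      · -- letter is an inverse generator
        have hLp : L[p]'hpl = ((L[p]'hpl).1, false) := by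
          rw [← hb]
        have hs := hσdown _ p hpn hLp
        have h1 : (⟨n-p, by omega⟩ : Fin (n+1)) = ⟨d+1, by omega⟩ := Fin.mk_eq_mk.mpr (by omega)
        have h2 : (⟨n-1-p, by omega⟩ : Fin (n+1)) = ⟨d, by omega⟩ := Fin.mk_eq_mk.mpr (by omega)
        rw [h1, h2] at hs
        simp only [hF, hb, cond_false]
        rw [Equiv.Perm.inv_eq_iff_eq]
        exact hs.symm
      · have hLp : L[p]'hpl = ((L[p]'hpl).1, true) := by
          rw [← hb]
        have hs := hσup _ p hpn hLp
        have h1 : (⟨n-1-p, by omega⟩ : Fin (n+1)) = ⟨d, by omega⟩ := Fin.mk_eq_mk.mpr (by omega)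
        have h2 : (⟨n-p, by omega⟩ : Fin (n+1)) = ⟨d+1, by omega⟩ := Fin.mk_eq_mk.mpr (by omega)
        rw [h1, h2] at hs
        simp only [hF, hb, cond_true]
        exact hs
  intro hone
  have hw0 : FreeGroup.lift σ w = (((L.drop 0).map F).prod) := by
    conv_lhs => rw [← FreeGroup.mk_toWord (x := w)]
    rw [FreeGroup.lift_mk]
    rfl
  have := hinv n le_rfl 0 (by omega)
  rw [← hw0, hone] at this
  have : (0 : ℕ) = n := congrArg Fin.val this
  omega

private def iterHom (e : FreeGroup (Fin 2) →* FreeGroup (Fin 2)) :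
    ℕ → (FreeGroup (Fin 2) →* FreeGroup (Fin 2))
  | 0 => MonoidHom.id _
  | m+1 => e.comp (iterHom e m)

lemma iterHom_surj {e : FreeGroup (Fin 2) →* FreeGroup (Fin 2)} (he : Surjective e) :
    ∀ m, Surjective (iterHom e m)
  | 0 => surjective_id
  | m+1 => he.comp (iterHom_surj he m)

lemma iterHom_add (e : FreeGroup (Fin 2) →* FreeGroup (Fin 2)) (k m : ℕ) :
    iterHom e (k + m) = (iterHom e k).comp (iterHom e m) := by
  induction k with
  | zero => simp [iterHom]
  | succ k ih =>
    have : k + 1 + m = (k + m) + 1 := by omega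
    rw [this]
    show e.comp (iterHom e (k+m)) = _
    rw [ih]
    rfl

lemma iterHom_one (e : FreeGroup (Fin 2) →* FreeGroup (Fin 2)) : iterHom e 1 = e := by
  show e.comp (MonoidHom.id _) = e
  rfl

lemma hopf (e : FreeGroup (Fin 2) →* FreeGroup (Fin 2)) (he : Surjective e) :
    Injective e := by
  rw [injective_iff_map_eq_one]
  intro g hg
  by_contra hg1
  obtain ⟨n, hn, π, hπ⟩ := freeGroup_detect g hg1
  obtain ⟨m, m', hmm', heq⟩ := Finite.exists_ne_map_eq_of_infinite
    (fun m : ℕ => fun j : Fin 2 => π ((iterHom e m) (FreeGroup.of j)))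
  -- wlog m < m'
  wlog hlt : m < m' generalizing m m'
  · exact this m' m (Ne.symm hmm') heq.symm (by omega)
  have hhomeq : π.comp (iterHom e m) = π.comp (iterHom e m') :=
    FreeGroup.ext_hom _ _ fun j => congrFun heq j
  set d := m' - m with hd
  have hd1 : 1 ≤ d := by omega
  have hm' : m' = d + m := by omega
  have hπeq : ∀ v, π v = π ((iterHom e d) v) := by
    intro v
    obtain ⟨u, hu⟩ := iterHom_surj he m v
    have h1 : π v = (π.comp (iterHom e m)) u := by rw [MonoidHom.comp_apply, hu]
    rw [h1, hhomeq, MonoidHom.comp_apply, hm', iterHom_add, MonoidHom.comp_apply, hu]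
  have hiterg : (iterHom e d) g = 1 := by
    have : d = (d - 1) + 1 := by omega
    rw [this, iterHom_add, MonoidHom.comp_apply, iterHom_one, hg, map_one]
  apply hπ
  rw [hπeq g, hiterg, map_one]

lemma freeGroup_subsingleton_commute {ι : Type*} [Subsingleton ι] (a b : FreeGroup ι) :
    a * b = b * a := by
  rcases isEmpty_or_nonempty ι with h | h
  · have htriv : ∀ g : FreeGroup ι, g = 1 := by
      intro g
      induction g using FreeGroup.induction_on with
      | C1 => rfl
      | of x => exact isEmptyElim x
      | inv_of x _ => simp_all
      | mul x y hx hy => rw [hx, hy, one_mul]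
    rw [htriv a, htriv b]
  · inhabit ι
    have hpow : ∀ g : FreeGroup ι, ∃ m : ℤ, g = (FreeGroup.of default) ^ m := by
      intro g
      induction g using FreeGroup.induction_on with
      | C1 => exact ⟨0, by simp⟩
      | of x => exact ⟨1, by rw [Subsingleton.elim x default, zpow_one]⟩
      | inv_of x ih =>
        obtain ⟨m, hm⟩ := ih
        exact ⟨-m, by rw [hm, zpow_neg]⟩
      | mul x y hx hy =>
        obtain ⟨m, hm⟩ := hx
        obtain ⟨m', hm'⟩ := hy
        exact ⟨m + m', by rw [hm, hm', zpow_add]⟩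
    obtain ⟨m, hm⟩ := hpow a
    obtain ⟨m', hm'⟩ := hpow b
    rw [hm, hm', ← zpow_add, ← zpow_add, add_comm]

lemma key_inj {k : ℕ} (x y : FreeGroup (Fin k)) (hxy : x * y ≠ y * x) :
    Injective (FreeGroup.lift ![x, y] : FreeGroup (Fin 2) →* FreeGroup (Fin k)) := by
  classical
  haveI : Fact (Nat.Prime 3) := ⟨by norm_num⟩
  set φ := (FreeGroup.lift ![x, y] : FreeGroup (Fin 2) →* FreeGroup (Fin k)) with hφ
  set H := φ.range with hH
  set ι := IsFreeGroup.Generators H with hι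
  set iso : H ≃* FreeGroup ι := IsFreeGroup.toFreeGroup H with hiso
  set ψ : FreeGroup (Fin 2) →* H := φ.rangeRestrict with hψdef
  have hψ : Surjective ψ := φ.rangeRestrict_surjective
  have hsurj : Surjective (iso.toMonoidHom.comp ψ) := iso.surjective.comp hψ
  -- bound the cardinality of ι by 2
  set V := (ι →₀ ZMod 3) with hV
  set χ : FreeGroup ι →* Multiplicative V :=
    FreeGroup.lift (fun i => Multiplicative.ofAdd (Finsupp.single i (1 : ZMod 3))) with hχ
  set θ : FreeGroup (Fin 2) →* Multiplicative V := χ.comp (iso.toMonoidHom.comp ψ) with hθ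
  set W : Submodule (ZMod 3) V :=
    Submodule.span (ZMod 3) (Set.range fun j : Fin 2 => (θ (FreeGroup.of j)).toAdd) with hW
  set U : Subgroup (Multiplicative V) := AddSubgroup.toSubgroup W.toAddSubgroup with hU
  have hrange : ∀ u : FreeGroup (Fin 2), θ u ∈ U := by
    have hle : (⊤ : Subgroup (FreeGroup (Fin 2))).map θ ≤ U := by
      rw [← FreeGroup.closure_range_of (Fin 2), MonoidHom.map_closure]
      apply Subgroup.closure_le _ |>.mpr
      rintro _ ⟨_, ⟨j, rfl⟩, rfl⟩
      show (θ (FreeGroup.of j)).toAdd ∈ W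
      exact Submodule.subset_span ⟨j, rfl⟩
    intro u
    exact hle ⟨u, Subgroup.mem_top u, rfl⟩
  have hWtop : W = ⊤ := by
    rw [eq_top_iff]
    intro v _
    have hv : v ∈ Submodule.span (ZMod 3) (Set.range fun i : ι => Finsupp.single i (1 : ZMod 3)) := by
      have hbs : Set.range (fun i : ι => Finsupp.single i (1 : ZMod 3)) =
          Set.range ⇑(Finsupp.basisSingleOne (R := ZMod 3) (ι := ι)) := by
        ext v'
        simp [Finsupp.coe_basisSingleOne]
      rw [hbs, Module.Basis.span_eq]; trivial
    refine Submodule.span_le.mpr ?_ hv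
    rintro _ ⟨i, rfl⟩
    obtain ⟨u, hu⟩ := hsurj (FreeGroup.of i)
    have h1 : θ u = Multiplicative.ofAdd (Finsupp.single i (1 : ZMod 3)) := by
      rw [hθ, MonoidHom.comp_apply, hu, hχ, FreeGroup.lift_apply_of]
    have h2 := hrange u
    rw [h1] at h2
    exact h2
  have hcard : #ι ≤ ((2:ℕ) : Cardinal) := by
    have h1 : Module.rank (ZMod 3) V = #ι := by
      show Module.rank (ZMod 3) (ι →₀ ZMod 3) = #ι
      exact rank_finsupp_self' (R := ZMod 3)
    have h2 : Module.rank (ZMod 3) V = Module.rank (ZMod 3) W := by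
      rw [hWtop, rank_top]
    have h3 : Module.rank (ZMod 3) W ≤
        #(Set.range fun j : Fin 2 => (θ (FreeGroup.of j)).toAdd) := rank_span_le _
    have h4 : #(Set.range fun j : Fin 2 => (θ (FreeGroup.of j)).toAdd) ≤ #(Fin 2) :=
      Cardinal.mk_range_le
    rw [Cardinal.mk_fin] at h4
    calc #ι = Module.rank (ZMod 3) V := h1.symm
    _ ≤ ((2:ℕ) : Cardinal) := h2.le.trans (h3.trans h4)
  have hfin : Finite ι := by
    rw [← Cardinal.lt_aleph0_iff_finite]
    exact hcard.trans_lt (Cardinal.nat_lt_aleph0 2)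
  haveI : Fintype ι := @Fintype.ofFinite ι hfin
  have hcard2 : Fintype.card ι ≤ 2 := by
    have h5 : ((Fintype.card ι : ℕ) : Cardinal) ≤ ((2:ℕ) : Cardinal) := by
      rw [← Cardinal.mk_fintype]; exact hcard
    exact_mod_cast h5
  by_cases hcase : Fintype.card ι ≤ 1
  · -- then H is abelian, contradicting hxy
    exfalso
    haveI hss : Subsingleton ι := Fintype.card_le_one_iff_subsingleton.mp hcase
    have hmemx : x ∈ H := ⟨FreeGroup.of 0, by simp [hφ]⟩
    have hmemy : y ∈ H := ⟨FreeGroup.of 1, by simp [hφ]⟩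
    have hcomm : (⟨x, hmemx⟩ : H) * ⟨y, hmemy⟩ = ⟨y, hmemy⟩ * ⟨x, hmemx⟩ := by
      apply iso.injective
      rw [map_mul, map_mul]
      exact freeGroup_subsingleton_commute _ _
    apply hxy
    exact congrArg Subtype.val hcomm
  · have hcard2' : Fintype.card ι = 2 := by omega
    have e : ι ≃ Fin 2 := Fintype.equivFinOfCardEq hcard2'
    set c : FreeGroup ι ≃* FreeGroup (Fin 2) := FreeGroup.freeGroupCongr e with hc
    set E : FreeGroup (Fin 2) →* FreeGroup (Fin 2) :=
      c.toMonoidHom.comp (iso.toMonoidHom.comp ψ) with hE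
    have hEsurj : Surjective E := c.surjective.comp hsurj
    have hEinj : Injective E := hopf E hEsurj
    intro u v huv
    apply hEinj
    have hψuv : ψ u = ψ v := Subtype.ext
      ((φ.coe_rangeRestrict u).trans (huv.trans (φ.coe_rangeRestrict v).symm))
    rw [hE]
    simp only [MonoidHom.comp_apply, hψuv]


/-- `x` and `y` freely generate a free subgroup of rank 2: the homomorphism from the free
group on two generators sending the generators to `x` and `y` is injective. -/
def FreelyGenerate {G : Type*} [Group G] (x y : G) : Prop :=
  Function.Injective ⇑(FreeGroup.lift ![x, y] : FreeGroup (Fin 2) →* G)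

/-- `ℤ × F_k` satisfies Wise'"'"'s Power Alternative. -/
theorem Z_times_free_wise_power_alternative (k : ℕ)
    (a b : Multiplicative ℤ × FreeGroup (Fin k)) :
    ∃ n : ℕ, 1 ≤ n ∧ (Commute (a ^ n) (b ^ n) ∨ FreelyGenerate (a ^ n) (b ^ n)) := by
  refine ⟨1, le_rfl, ?_⟩
  rw [pow_one, pow_one]
  by_cases hxy : a.2 * b.2 = b.2 * a.2
  · left
    show a * b = b * a
    exact Prod.ext (mul_comm _ _) hxy
  · right
    have hsnd : (MonoidHom.snd (Multiplicative ℤ) (FreeGroup (Fin k))).comp (FreeGroup.lift ![a, b])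
        = FreeGroup.lift ![a.2, b.2] := by
      apply FreeGroup.ext_hom
      intro j
      fin_cases j <;> simp
    have hinj : Injective (⇑(MonoidHom.snd (Multiplicative ℤ) (FreeGroup (Fin k))) ∘
        ⇑(FreeGroup.lift ![a, b])) := by
      rw [← MonoidHom.coe_comp, hsnd]
      exact key_inj a.2 b.2 hxy
    exact hinj.of_comp
end

section
/- Let k be a natural number and let G = ℤ × F_k, the direct product of the integers with the free group of rank k. Then every subgroup of G either contains a non-abelian free subgroup, or is virtually free abelian of rank at most 2. -/
/-- A group contains a non-abelian free subgroup: there is an injective homomorphism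
from the free group of rank 2. -/
def ContainsNonabelianFree (G : Type*) [Group G] : Prop :=
  ∃ f : FreeGroup (Fin 2) →* G, Function.Injective f

/-- A group is virtually free abelian of rank at most 2: it has a finite-index subgroup
isomorphic to `ℤ^k` for some `0 ≤ k ≤ 2`. -/
def VirtuallyFreeAbelianRankLeTwo (G : Type*) [Group G] : Prop :=
  ∃ K : Subgroup G, K.FiniteIndex ∧ ∃ k : ℕ, k ≤ 2 ∧
    Nonempty (K ≃* Multiplicative (Fin k → ℤ))

/-!
The projection of `H` to the free factor has a free image `P` (Nielsen–Schreier). If `P` has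
two distinct free generators it contains `F₂`, and since a surjection onto a free group splits,
`H` contains `F₂` as well. Otherwise `P` embeds in `ℤ`, so `H` embeds in `ℤ × ℤ` and is itself
free abelian of rank at most 2.
-/

open Function

variable {G P : Type*} [Group G] [Group P]

theorem IsFreeGroup.exists_comp_eq_id_of_surjective [IsFreeGroup P] {f : G →* P}
    (hf : Surjective f) : ∃ s : P →* G, f.comp s = MonoidHom.id P :=
  ⟨IsFreeGroup.lift (surjInv hf ∘ IsFreeGroup.of),
    IsFreeGroup.ext_hom fun i => by simp [IsFreeGroup.lift_of, surjInv_eq hf]⟩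

theorem IsFreeGroup.exists_injective_multiplicativeInt [IsFreeGroup G]
    [Subsingleton (IsFreeGroup.Generators G)] : ∃ φ : G →* Multiplicative ℤ, Injective φ := by
  rcases isEmpty_or_nonempty (IsFreeGroup.Generators G) with h | ⟨⟨i⟩⟩
  · have : Subsingleton G := (IsFreeGroup.toFreeGroup G).subsingleton_congr.mpr inferInstance
    exact ⟨1, injective_of_subsingleton _⟩
  · have := uniqueOfSubsingleton i
    let e := (IsFreeGroup.toFreeGroup G).trans FreeGroup.mulEquivIntOfUnique
    exact ⟨e.toMonoidHom, e.injective⟩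

theorem ContainsNonabelianFree.of_injective {f : G →* P} (hf : Injective f)
    (h : ContainsNonabelianFree G) : ContainsNonabelianFree P :=
  let ⟨g, hg⟩ := h
  ⟨f.comp g, hf.comp hg⟩

theorem ContainsNonabelianFree.of_surjective [IsFreeGroup P] {f : G →* P} (hf : Surjective f)
    (h : ContainsNonabelianFree P) : ContainsNonabelianFree G := by
  obtain ⟨s, hs⟩ := IsFreeGroup.exists_comp_eq_id_of_surjective hf
  exact h.of_injective (f := s) (LeftInverse.injective (DFunLike.congr_fun hs))

theorem IsFreeGroup.containsNonabelianFree [IsFreeGroup G]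
    [Nontrivial (IsFreeGroup.Generators G)] : ContainsNonabelianFree G := by
  obtain ⟨a, b, hab⟩ := exists_pair_ne (IsFreeGroup.Generators G)
  have hj : Injective ![a, b] := by
    intro i j; fin_cases i <;> fin_cases j <;> simp [hab, hab.symm]
  exact ContainsNonabelianFree.of_injective (f := (IsFreeGroup.toFreeGroup G).symm.toMonoidHom)
    (IsFreeGroup.toFreeGroup G).symm.injective
    ⟨FreeGroup.map ![a, b], FreeGroup.map_injective hj⟩

theorem exists_mulEquiv_fin_int_of_injective {M : Type*} [AddCommGroup M]
    [Module.Free ℤ M] [Module.Finite ℤ M] {f : G →* Multiplicative M} (hf : Injective f) :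
    ∃ m ≤ Module.finrank ℤ M, Nonempty (G ≃* Multiplicative (Fin m → ℤ)) := by
  let N := AddSubgroup.toIntSubmodule (MonoidHom.toAdditiveLeft f).range
  refine ⟨_, N.finrank_le, ⟨AddEquiv.toMultiplicativeRight ?_⟩⟩
  -- `AddEquiv.refl N` works because the range and `N` have the same carrier.
  exact ((AddMonoidHom.ofInjective hf).trans (AddEquiv.refl N)).trans
    (Module.finBasis ℤ N).equivFun.toAddEquiv

theorem VirtuallyFreeAbelianRankLeTwo.of_injective {f : G →* Multiplicative ℤ × Multiplicative ℤ}
    (hf : Injective f) : VirtuallyFreeAbelianRankLeTwo G := by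
  obtain ⟨m, hm, ⟨e⟩⟩ := exists_mulEquiv_fin_int_of_injective
    (f := (MulEquiv.prodMultiplicative ℤ ℤ).symm.toMonoidHom.comp f)
    ((MulEquiv.prodMultiplicative ℤ ℤ).symm.injective.comp hf)
  exact ⟨⊤, inferInstance, m, by simpa using hm, ⟨Subgroup.topEquiv.trans e⟩⟩

theorem Subgroup.injective_fst_prod_rangeRestrict_snd {A B : Type*} [Group A] [Group B]
    (H : Subgroup (A × B)) :
    Injective (((MonoidHom.fst A B).comp H.subtype).prod
      ((MonoidHom.snd A B).comp H.subtype).rangeRestrict) := by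
  intro x y hxy
  simp only [MonoidHom.prod_apply, Prod.mk.injEq, Subtype.ext_iff] at hxy
  exact Subtype.ext (Prod.ext hxy.1 hxy.2)

/-- Every subgroup of `ℤ × F_k` either contains a non-abelian free subgroup or is
virtually free abelian of rank at most 2. -/
theorem Z_times_free_tits_alternative (k : ℕ)
    (H : Subgroup (Multiplicative ℤ × FreeGroup (Fin k))) :
    ContainsNonabelianFree H ∨ VirtuallyFreeAbelianRankLeTwo H := by
  let q := (MonoidHom.snd _ _).comp H.subtype
  rcases subsingleton_or_nontrivial (IsFreeGroup.Generators q.range) with hP | hP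
  · obtain ⟨φ, hφ⟩ := IsFreeGroup.exists_injective_multiplicativeInt (G := q.range)
    exact .inr <| .of_injective (f := ((MonoidHom.id _).prodMap φ).comp
      (((MonoidHom.fst _ _).comp H.subtype).prod q.rangeRestrict))
      ((injective_id.prodMap hφ).comp H.injective_fst_prod_rangeRestrict_snd)
  · exact .inl <| IsFreeGroup.containsNonabelianFree.of_surjective q.rangeRestrict_surjective
end

section
/- Let m ≥ 3 be an integer and let A_m be the dihedral Artin group on generators s, t. Then the cyclic subgroups generated by s and by t intersect trivially: ⟨s⟩ ∩ ⟨t⟩ = {1}. Consequently, for any g, h ∈ A_m, the left cosets g⟨s⟩ and h⟨t⟩ intersect in at most one element. -/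
/-- The generator `s` of the dihedral Artin group. -/
def DihedralArtin.s (m : ℕ) : DihedralArtin m := PresentedGroup.of true

/-- The generator `t` of the dihedral Artin group. -/
def DihedralArtin.t (m : ℕ) : DihedralArtin m := PresentedGroup.of false

namespace DAproof

open Monoid Monoid.CoprodI

/-- The two factors `C₂` and `C_m` of the free product. -/
abbrev Fac (m : ℕ) : Bool → Type := fun b => Multiplicative (ZMod (bif b then 2 else m))

/-- The free product `C₂ * C_m`. -/
abbrev K (m : ℕ) := Monoid.CoprodI (Fac m)

def xx (m : ℕ) : Fac m true := Multiplicative.ofAdd (1 : ZMod 2)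
def uu (m : ℕ) : Fac m false := Multiplicative.ofAdd (1 : ZMod m)

def X (m : ℕ) : K m := Monoid.CoprodI.of (xx m)
def U (m : ℕ) : K m := Monoid.CoprodI.of (uu m)

lemma xx_mul_self (m : ℕ) : xx m * xx m = 1 :=
  show ((Multiplicative.ofAdd (1 : ZMod 2)) * Multiplicative.ofAdd (1 : ZMod 2)
      : Multiplicative (ZMod 2)) = 1 by decide
lemma xx_ne_one (m : ℕ) : xx m ≠ 1 :=
  show ((Multiplicative.ofAdd (1 : ZMod 2)) : Multiplicative (ZMod 2)) ≠ 1 by decide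
lemma xx_inv (m : ℕ) : (xx m)⁻¹ = xx m :=
  show ((Multiplicative.ofAdd (1 : ZMod 2)) : Multiplicative (ZMod 2))⁻¹ = Multiplicative.ofAdd 1 by decide

lemma uu_ne_one (m : ℕ) (hm : 3 ≤ m) : uu m ≠ 1 := by
  haveI : NeZero m := ⟨by omega⟩
  intro h
  have h2 : ((1 : ℕ) : ZMod m) = 0 := by
    simpa [uu] using congrArg Multiplicative.toAdd h
  rw [ZMod.natCast_eq_zero_iff] at h2
  exact absurd (Nat.le_of_dvd one_pos h2) (by omega)

lemma uu_sq_ne_one (m : ℕ) (hm : 3 ≤ m) : uu m * uu m ≠ 1 := by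
  haveI : NeZero m := ⟨by omega⟩
  intro h
  have h2 : ((2 : ℕ) : ZMod m) = 0 := by
    have := congrArg Multiplicative.toAdd h
    simpa [uu, one_add_one_eq_two] using this
  rw [ZMod.natCast_eq_zero_iff] at h2
  exact absurd (Nat.le_of_dvd two_pos h2) (by omega)

lemma uu_pow_m (m : ℕ) : uu m ^ m = 1 := by
  have : (m : ZMod m) = 0 := ZMod.natCast_self m
  have h : m • (1 : ZMod m) = 0 := by simpa using this
  apply Multiplicative.toAdd.injective
  simpa [uu] using h


section AltProd

lemma altProd_zero {G : Type*} [Group G] (x y : G) : altProd x y 0 = 1 := rfl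

lemma altProd_one {G : Type*} [Group G] (x y : G) : altProd x y 1 = x := by
  simp [altProd, List.range_succ]

lemma altProd_succ_succ {G : Type*} [Group G] (x y : G) (n : ℕ) :
    altProd x y (n + 2) = x * y * altProd x y n := by
  unfold altProd
  rw [List.range_succ_eq_map, List.range_succ_eq_map]
  simp only [List.map_cons, List.map_map, List.prod_cons, Nat.succ_eq_add_one]
  norm_num
  rw [← mul_assoc]
  congr 2
  apply List.map_congr_left
  intro i _
  simp only [Function.comp_apply, Nat.succ_eq_add_one]
  have : (i + 1 + 1) % 2 = i % 2 := by omega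
  simp only [this]

lemma map_altProd {G H : Type*} [Group G] [Group H] (f : G →* H) (x y : G) (n : ℕ) :
    f (altProd x y n) = altProd (f x) (f y) n := by
  unfold altProd
  rw [← List.prod_hom _ f, List.map_map]
  congr 1
  apply List.map_congr_left
  intro i _
  simp [apply_ite f]

end AltProd

section Rel

variable (m : ℕ)

/-- Closed form for the alternating product of `ux` and `xu`. -/
lemma altProd_UXXU (n : ℕ) :
    altProd (U m * X m) (X m * U m) n =
      Monoid.CoprodI.of (uu m ^ n) * (if n % 2 = 0 then 1 else X m) := by
  induction n using Nat.twoStepInduction with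
  | zero => simp [altProd_zero]
  | one => simp [altProd_one, U, X, pow_one]
  | more n ih _ =>
    rw [altProd_succ_succ, ih]
    have hx : X m * X m = 1 := by
      rw [X, ← MonoidHom.map_mul, xx_mul_self, MonoidHom.map_one]
    have h2 : U m * X m * (X m * U m) = Monoid.CoprodI.of (uu m ^ 2) := by
      rw [mul_assoc (U m), ← mul_assoc (X m), hx, one_mul, U, ← MonoidHom.map_mul, ← pow_two]
    rw [← mul_assoc, h2, ← MonoidHom.map_mul, ← pow_add, add_comm 2 n]
    have hmod : (n + 2) % 2 = n % 2 := by omega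
    simp only [hmod]

lemma X_inv : (X m)⁻¹ = X m := by rw [X, ← MonoidHom.map_inv, xx_inv]

/-- The braid relation holds for `ux` and `xu` in `C₂ * C_m`. -/
lemma braid_rel : altProd (U m * X m) (X m * U m) m = altProd (X m * U m) (U m * X m) m := by
  have hconj : altProd (X m * U m) (U m * X m) m =
      (MulAut.conj (X m)).toMonoidHom (altProd (U m * X m) (X m * U m) m) := by
    rw [map_altProd]
    have hx : X m * X m = 1 := by
      rw [X, ← MonoidHom.map_mul, xx_mul_self, MonoidHom.map_one]
    congr 1
    · simp only [MulEquiv.coe_toMonoidHom, MulAut.conj_apply]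
      group
    · show U m * X m = X m * (X m * U m) * (X m)⁻¹
      rw [X_inv, ← mul_assoc, hx, one_mul]
  rw [hconj, altProd_UXXU, uu_pow_m, MonoidHom.map_one, one_mul]
  rcases Nat.even_or_odd m with h | h
  · simp [Nat.even_iff.mp h]
  · simp only [Nat.odd_iff.mp h, one_ne_zero, if_false, MulEquiv.coe_toMonoidHom,
      MulAut.conj_apply]
    group

end Rel


section Hom

variable (m : ℕ)

def fgen (m : ℕ) : Bool → K m := fun b => bif b then U m * X m else X m * U m

lemma rels_hold : ∀ r ∈ dihedralRels m, FreeGroup.lift (fgen m) r = 1 := by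
  intro r hr
  rw [dihedralRels, Set.mem_singleton_iff] at hr
  subst hr
  rw [map_mul, map_inv, map_altProd, map_altProd]
  simp only [FreeGroup.lift_apply_of]
  show altProd (fgen m true) (fgen m false) m * (altProd (fgen m false) (fgen m true) m)⁻¹ = 1
  have h1 : fgen m true = U m * X m := rfl
  have h2 : fgen m false = X m * U m := rfl
  rw [h1, h2, braid_rel, mul_inv_cancel]

def phi (m : ℕ) : DihedralArtin m →* K m := PresentedGroup.toGroup (rels_hold m)

lemma phi_s : phi m (DihedralArtin.s m) = U m * X m := PresentedGroup.toGroup.of _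

lemma phi_t : phi m (DihedralArtin.t m) = X m * U m := PresentedGroup.toGroup.of _

end Hom

section Words

open Monoid.CoprodI

variable (m : ℕ)

def wL (m : ℕ) (c : Fac m false) : ℕ → List (Σ b, Fac m b)
  | 0 => []
  | n+1 => ⟨false, c⟩ :: ⟨true, xx m⟩ :: wL m c n

def vL (m : ℕ) (d : Fac m false) : ℕ → List (Σ b, Fac m b)
  | 0 => []
  | n+1 => ⟨true, xx m⟩ :: ⟨false, d⟩ :: vL m d n

lemma wL_length (c : Fac m false) (n : ℕ) : (wL m c n).length = 2 * n := by
  induction n with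
  | zero => simp [wL]
  | succ n ih => simp [wL, ih]; omega

lemma vL_length (d : Fac m false) (n : ℕ) : (vL m d n).length = 2 * n := by
  induction n with
  | zero => simp [vL]
  | succ n ih => simp [vL, ih]; omega

lemma wL_chain (c : Fac m false) (n : ℕ) :
    (wL m c n).Chain' (fun l l' => l.1 ≠ l'.1) := by
  induction n with
  | zero => simp [wL]; exact List.isChain_nil
  | succ n ih =>
    rw [wL, List.Chain', List.isChain_cons, List.isChain_cons]
    refine ⟨?_, ?_, ih⟩
    · intro h hh
      simp only [List.head?_cons, Option.mem_def, Option.some.injEq] at hh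
      subst hh
      simp
    · intro h hh
      cases n with
      | zero => simp [wL] at hh
      | succ k =>
        rw [wL] at hh
        simp only [List.head?_cons, Option.mem_def, Option.some.injEq] at hh
        subst hh
        simp

lemma vL_chain (d : Fac m false) (n : ℕ) :
    (vL m d n).Chain' (fun l l' => l.1 ≠ l'.1) := by
  induction n with
  | zero => simp [vL]; exact List.isChain_nil
  | succ n ih =>
    rw [vL, List.Chain', List.isChain_cons, List.isChain_cons]
    refine ⟨?_, ?_, ih⟩
    · intro h hh
      simp only [List.head?_cons, Option.mem_def, Option.some.injEq] at hh
      subst hh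
      simp
    · intro h hh
      cases n with
      | zero => simp [vL] at hh
      | succ k =>
        rw [vL] at hh
        simp only [List.head?_cons, Option.mem_def, Option.some.injEq] at hh
        subst hh
        simp

lemma wL_ne_one (c : Fac m false) (hc : c ≠ 1) (n : ℕ) :
    ∀ l ∈ wL m c n, Sigma.snd l ≠ 1 := by
  induction n with
  | zero => simp [wL]
  | succ n ih =>
    intro l hl
    rw [wL, List.mem_cons, List.mem_cons] at hl
    rcases hl with rfl | rfl | hl
    · exact hc
    · exact xx_ne_one m
    · exact ih l hl

lemma vL_ne_one (d : Fac m false) (hd : d ≠ 1) (n : ℕ) :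
    ∀ l ∈ vL m d n, Sigma.snd l ≠ 1 := by
  induction n with
  | zero => simp [vL]
  | succ n ih =>
    intro l hl
    rw [vL, List.mem_cons, List.mem_cons] at hl
    rcases hl with rfl | rfl | hl
    · exact xx_ne_one m
    · exact hd
    · exact ih l hl

def wW (c : Fac m false) (hc : c ≠ 1) (n : ℕ) : Word (Fac m) :=
  ⟨wL m c n, wL_ne_one m c hc n, wL_chain m c n⟩

def vW (d : Fac m false) (hd : d ≠ 1) (n : ℕ) : Word (Fac m) :=
  ⟨vL m d n, vL_ne_one m d hd n, vL_chain m d n⟩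

lemma wL_prod (c : Fac m false) (n : ℕ) :
    ((wL m c n).map fun l => (Monoid.CoprodI.of l.2 : K m)).prod
      = (Monoid.CoprodI.of c * X m) ^ n := by
  induction n with
  | zero => simp [wL]
  | succ n ih =>
    rw [wL, List.map_cons, List.map_cons, List.prod_cons, List.prod_cons, ih, pow_succ',
      ← mul_assoc]
    rfl

lemma vL_prod (d : Fac m false) (n : ℕ) :
    ((vL m d n).map fun l => (Monoid.CoprodI.of l.2 : K m)).prod
      = (X m * Monoid.CoprodI.of d) ^ n := by
  induction n with
  | zero => simp [vL]
  | succ n ih =>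
    rw [vL, List.map_cons, List.map_cons, List.prod_cons, List.prod_cons, ih, pow_succ',
      ← mul_assoc]
    rfl

lemma word_eq_of_prod_eq {w₁ w₂ : Word (Fac m)} (h : w₁.prod = w₂.prod) : w₁ = w₂ :=
  Word.equiv.symm.injective h

/-- `(cx)^p = (dx)^q` forces `p = q` and, if nonzero, `c = d`. -/
lemma pow_cx_eq_dx {c d : Fac m false} (hc : c ≠ 1) (hd : d ≠ 1) {p q : ℕ}
    (h : (Monoid.CoprodI.of c * X m) ^ p = (Monoid.CoprodI.of d * X m) ^ q) :
    p = q ∧ (p ≠ 0 → c = d) := by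
  rw [← wL_prod, ← wL_prod] at h
  have hw : wW m c hc p = wW m d hd q := word_eq_of_prod_eq m h
  have hl : wL m c p = wL m d q := congrArg Word.toList hw
  have hlen := congrArg List.length hl
  rw [wL_length, wL_length] at hlen
  have hpq : p = q := by omega
  subst hpq
  refine ⟨rfl, fun hp => ?_⟩
  cases p with
  | zero => exact absurd rfl hp
  | succ n =>
    rw [wL, wL] at hl
    simp only [List.cons.injEq] at hl
    have h1 := hl.1
    simp only [Sigma.mk.inj_iff, heq_eq_eq, true_and] at h1
    exact h1

/-- `(cx)^p = (xd)^q` forces `p = q = 0`. -/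
lemma pow_cx_eq_xd {c d : Fac m false} (hc : c ≠ 1) (hd : d ≠ 1) {p q : ℕ}
    (h : (Monoid.CoprodI.of c * X m) ^ p = (X m * Monoid.CoprodI.of d) ^ q) :
    p = 0 ∧ q = 0 := by
  rw [← wL_prod, ← vL_prod] at h
  have hw : wW m c hc p = vW m d hd q := word_eq_of_prod_eq m h
  have hl : wL m c p = vL m d q := congrArg Word.toList hw
  cases p with
  | zero =>
    cases q with
    | zero => exact ⟨rfl, rfl⟩
    | succ k => rw [wL, vL] at hl; exact absurd hl (by simp)
  | succ n =>
    cases q with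
    | zero => rw [wL, vL] at hl; exact absurd hl (by simp)
    | succ k =>
      rw [wL, vL] at hl
      exfalso
      simp only [List.cons.injEq] at hl
      have h1 := hl.1
      simp only [Sigma.mk.inj_iff] at h1
      exact Bool.noConfusion h1.1

end Words


section Main

variable (m : ℕ)

lemma zpow_eq (hm : 3 ≤ m) {a b : ℤ}
    (h : (U m * X m) ^ a = (X m * U m) ^ b) : a = 0 ∧ b = 0 := by
  have hu : uu m ≠ 1 := uu_ne_one m hm
  have hui : (uu m)⁻¹ ≠ 1 := inv_ne_one.mpr hu
  have hTinv : (X m * U m)⁻¹ = Monoid.CoprodI.of (uu m)⁻¹ * X m := by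
    rw [mul_inv_rev, X_inv, U, ← MonoidHom.map_inv]
  have key : ∀ p q : ℕ, (U m * X m) ^ (p : ℤ) = (X m * U m) ^ (q : ℤ) → p = 0 ∧ q = 0 := by
    intro p q hpq
    rw [zpow_natCast, zpow_natCast] at hpq
    exact pow_cx_eq_xd m hu hu hpq
  have key2 : ∀ p q : ℕ, (U m * X m) ^ (p : ℤ) = (X m * U m) ^ (-(q : ℤ)) → p = 0 ∧ q = 0 := by
    intro p q hpq
    rw [zpow_natCast, zpow_neg, zpow_natCast, ← inv_pow, hTinv] at hpq
    obtain ⟨hpq', himp⟩ := pow_cx_eq_dx m hu hui hpq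
    subst hpq'
    rcases Nat.eq_zero_or_pos p with rfl | hp
    · exact ⟨rfl, rfl⟩
    · exfalso
      have hcd : uu m = (uu m)⁻¹ := himp (by omega)
      have h1 : uu m * uu m = 1 := by
        nth_rewrite 1 [hcd]
        rw [inv_mul_cancel]
      exact uu_sq_ne_one m hm h1
  rcases Int.eq_nat_or_neg a with ⟨p, rfl | rfl⟩ <;>
    rcases Int.eq_nat_or_neg b with ⟨q, rfl | rfl⟩
  · obtain ⟨h1, h2⟩ := key p q h; omega
  · obtain ⟨h1, h2⟩ := key2 p q h; omega
  · have h' := congrArg Inv.inv h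
    rw [← zpow_neg, ← zpow_neg, neg_neg] at h'
    obtain ⟨h1, h2⟩ := key2 p q h'; omega
  · have h' := congrArg Inv.inv h
    rw [← zpow_neg, ← zpow_neg, neg_neg, neg_neg] at h'
    obtain ⟨h1, h2⟩ := key p q h'; omega

end Main

end DAproof

open Pointwise in
/-- For `m ≥ 3`, the cyclic subgroups `⟨s⟩` and `⟨t⟩` of the dihedral Artin group
intersect trivially, and consequently any left cosets `g⟨s⟩` and `h⟨t⟩` intersect in at
most one element. -/
theorem dihedralArtin_cyclic_intersection_trivial (m : ℕ) (hm : 3 ≤ m) :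
    Subgroup.zpowers (DihedralArtin.s m) ⊓ Subgroup.zpowers (DihedralArtin.t m) = ⊥ ∧
    ∀ g h : DihedralArtin m,
      (g • (Subgroup.zpowers (DihedralArtin.s m) : Set (DihedralArtin m)) ∩
        h • (Subgroup.zpowers (DihedralArtin.t m) : Set (DihedralArtin m))).Subsingleton := by
  have hbot : Subgroup.zpowers (DihedralArtin.s m) ⊓ Subgroup.zpowers (DihedralArtin.t m) = ⊥ := by
    rw [eq_bot_iff]
    intro g hg
    obtain ⟨hgs, hgt⟩ := Subgroup.mem_inf.mp hg
    rw [Subgroup.mem_zpowers_iff] at hgs hgt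
    obtain ⟨a, ha⟩ := hgs
    obtain ⟨b, hb⟩ := hgt
    have h1 := congrArg (DAproof.phi m) ha
    have h2 := congrArg (DAproof.phi m) hb
    rw [map_zpow, DAproof.phi_s] at h1
    rw [map_zpow, DAproof.phi_t] at h2
    have hphi : (DAproof.U m * DAproof.X m) ^ a = (DAproof.X m * DAproof.U m) ^ b := by
      rw [h1, ← h2]
    obtain ⟨ha0, -⟩ := DAproof.zpow_eq m hm hphi
    rw [Subgroup.mem_bot, ← ha, ha0, zpow_zero]
  refine ⟨hbot, ?_⟩
  intro g h x hx y hy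
  obtain ⟨w1, hw1, e1⟩ := Set.mem_smul_set.mp hx.1
  obtain ⟨w2, hw2, e2⟩ := Set.mem_smul_set.mp hx.2
  obtain ⟨w3, hw3, e3⟩ := Set.mem_smul_set.mp hy.1
  obtain ⟨w4, hw4, e4⟩ := Set.mem_smul_set.mp hy.2
  have hxy1 : x⁻¹ * y = w1⁻¹ * w3 := by
    rw [← e1, ← e3, smul_eq_mul, smul_eq_mul]
    group
  have hxy2 : x⁻¹ * y = w2⁻¹ * w4 := by
    rw [← e2, ← e4, smul_eq_mul, smul_eq_mul]
    group
  have hmem : x⁻¹ * y ∈ Subgroup.zpowers (DihedralArtin.s m) ⊓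
      Subgroup.zpowers (DihedralArtin.t m) := by
    rw [Subgroup.mem_inf]
    constructor
    · rw [hxy1]
      exact mul_mem (inv_mem (SetLike.mem_coe.mp hw1)) (SetLike.mem_coe.mp hw3)
    · rw [hxy2]
      exact mul_mem (inv_mem (SetLike.mem_coe.mp hw2)) (SetLike.mem_coe.mp hw4)
  rw [hbot, Subgroup.mem_bot] at hmem
  exact (inv_mul_eq_one.mp hmem)
end
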